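/- Let v and w be C^∞ vector fields on ℝ^N with [v,w] = 0. Then the bivector field v_C ∧ w_V on ℝ^N × ℝ^N (wedge of the complete lift of v with the vertical lift of w) is a Poisson tensor. -/

import Mathlib

open scoped BigOperators

/-- Partial derivative of `f : ℝ^N → ℝ` in the `s`-th coordinate direction. -/
noncomputable def pd {N : ℕ} (f : (Fin N → ℝ) → ℝ) (s : Fin N) (x : Fin N → ℝ) : ℝ :=
  fderiv ℝ f x (Pi.single s 1)

/-- Coordinate direction on `ℝ^N × ℝ^N` indexed by `Fin N ⊕ Fin N`. -/
noncomputable def dir (N : ℕ) (a : Fin N ⊕ Fin N) : (Fin N → ℝ) × (Fin N → ℝ) :=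
  Sum.elim (fun i => (Pi.single i 1, 0)) (fun i => (0, Pi.single i 1)) a

/-- Partial derivative on `ℝ^N × ℝ^N` in the `a`-th coordinate direction. -/
noncomputable def pdT {N : ℕ} (F : (Fin N → ℝ) × (Fin N → ℝ) → ℝ)
    (a : Fin N ⊕ Fin N) (z : (Fin N → ℝ) × (Fin N → ℝ)) : ℝ :=
  fderiv ℝ F z (dir N a)

/-- `π` is a Poisson tensor on `ℝ^N`: a smooth antisymmetric bivector field
satisfying the Jacobi identity. -/
def IsPoisson {N : ℕ} (π : (Fin N → ℝ) → Matrix (Fin N) (Fin N) ℝ) : Prop :=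
  (∀ i j, ContDiff ℝ (⊤ : ℕ∞) fun x => π x i j) ∧
  (∀ x i j, π x j i = - π x i j) ∧
  (∀ x i j k, ∑ s, (π x i s * pd (fun x => π x j k) s x
      + π x j s * pd (fun x => π x k i) s x
      + π x k s * pd (fun x => π x i j) s x) = 0)

/-- `v` is a (smooth) Poisson vector field for `π` (i.e. `L_v π = 0`). -/
def IsPoissonVF {N : ℕ} (π : (Fin N → ℝ) → Matrix (Fin N) (Fin N) ℝ)
    (v : (Fin N → ℝ) → Fin N → ℝ) : Prop :=
  (∀ i, ContDiff ℝ (⊤ : ℕ∞) fun x => v x i) ∧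
  (∀ x i j, ∑ s, (pd (fun x => π x i j) s x * v x s
      - π x s j * pd (fun x => v x i) s x
      - π x i s * pd (fun x => v x j) s x) = 0)

/-- The tangent lift `π_TM` of `π` to `ℝ^N × ℝ^N`. -/
noncomputable def tlift {N : ℕ} (π : (Fin N → ℝ) → Matrix (Fin N) (Fin N) ℝ)
    (z : (Fin N → ℝ) × (Fin N → ℝ)) : Matrix (Fin N ⊕ Fin N) (Fin N ⊕ Fin N) ℝ :=
  Matrix.of fun a b =>
    match a, b with
    | Sum.inl _, Sum.inl _ => 0
    | Sum.inl i, Sum.inr j => π z.1 i j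
    | Sum.inr i, Sum.inl j => π z.1 i j
    | Sum.inr i, Sum.inr j => ∑ s, pd (fun x => π x i j) s z.1 * z.2 s

/-- The complete lift `v_C` of a vector field `v`. -/
noncomputable def liftC {N : ℕ} (v : (Fin N → ℝ) → Fin N → ℝ)
    (z : (Fin N → ℝ) × (Fin N → ℝ)) : Fin N ⊕ Fin N → ℝ :=
  Sum.elim (fun i => v z.1 i) (fun i => ∑ s, pd (fun x => v x i) s z.1 * z.2 s)

/-- The vertical lift `v_V` of a vector field `v`. -/
def liftV {N : ℕ} (v : (Fin N → ℝ) → Fin N → ℝ)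
    (z : (Fin N → ℝ) × (Fin N → ℝ)) : Fin N ⊕ Fin N → ℝ :=
  Sum.elim (fun _ => 0) (fun i => v z.1 i)

/-- The wedge `u ∧ w` of two vector fields, as a bivector field. -/
def wedge {Z ι : Type*} (u w : Z → ι → ℝ) (z : Z) : Matrix ι ι ℝ :=
  Matrix.of fun a b => u z a * w z b - u z b * w z a

/-- A Poisson tensor on `ℝ^N × ℝ^N`: a smooth antisymmetric bivector field
satisfying the Jacobi identity. -/
def IsPoissonT {N : ℕ}
    (P : (Fin N → ℝ) × (Fin N → ℝ) → Matrix (Fin N ⊕ Fin N) (Fin N ⊕ Fin N) ℝ) : Prop :=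
  (∀ a b, ContDiff ℝ (⊤ : ℕ∞) fun z => P z a b) ∧
  (∀ z a b, P z b a = - P z a b) ∧
  (∀ z a b c, ∑ s, (P z a s * pdT (fun z => P z b c) s z
      + P z b s * pdT (fun z => P z c a) s z
      + P z c s * pdT (fun z => P z a b) s z) = 0)

/-- `c` is a Casimir function for `π` on `ℝ^N`. -/
def IsCasimir {N : ℕ} (π : (Fin N → ℝ) → Matrix (Fin N) (Fin N) ℝ)
    (c : (Fin N → ℝ) → ℝ) : Prop :=
  ContDiff ℝ (⊤ : ℕ∞) c ∧ ∀ x j, ∑ i, pd c i x * π x i j = 0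

/-- `F` is a Casimir function for the bivector field `P` on `ℝ^N × ℝ^N`. -/
def IsCasimirT {N : ℕ}
    (P : (Fin N → ℝ) × (Fin N → ℝ) → Matrix (Fin N ⊕ Fin N) (Fin N ⊕ Fin N) ℝ)
    (F : (Fin N → ℝ) × (Fin N → ℝ) → ℝ) : Prop :=
  ∀ z b, ∑ a, pdT F a z * P z a b = 0

/-- `f ∘ q : ℝ^N × ℝ^N → ℝ`. -/
def fq {N : ℕ} (f : (Fin N → ℝ) → ℝ) (z : (Fin N → ℝ) × (Fin N → ℝ)) : ℝ := f z.1

/-- The fiber-wise linear function `l_{df}` on `ℝ^N × ℝ^N`. -/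
noncomputable def ldf {N : ℕ} (f : (Fin N → ℝ) → ℝ) (z : (Fin N → ℝ) × (Fin N → ℝ)) : ℝ :=
  ∑ s, pd f s z.1 * z.2 s

/-- The commutator `[v,w]` of two vector fields on `ℝ^N`. -/
noncomputable def vbr {N : ℕ} (v w : (Fin N → ℝ) → Fin N → ℝ)
    (x : Fin N → ℝ) (i : Fin N) : ℝ :=
  ∑ s, (v x s * pd (fun x => w x i) s x - w x s * pd (fun x => v x i) s x)


section Helpers

variable {N : ℕ}

lemma contDiff_pd {f : (Fin N → ℝ) → ℝ} (hf : ContDiff ℝ (⊤ : ℕ∞) f) (s : Fin N) :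
    ContDiff ℝ (⊤ : ℕ∞) fun x => pd f s x :=
  (hf.fderiv_right (le_refl _)).clm_apply contDiff_const

lemma pdT_const (c : ℝ) (a : Fin N ⊕ Fin N) (z : (Fin N → ℝ) × (Fin N → ℝ)) :
    pdT (fun _ => c) a z = 0 := by
  simp [pdT, fderiv_const]

lemma pdT_mul {F G : (Fin N → ℝ) × (Fin N → ℝ) → ℝ} {z : (Fin N → ℝ) × (Fin N → ℝ)}
    (hF : DifferentiableAt ℝ F z) (hG : DifferentiableAt ℝ G z) (a : Fin N ⊕ Fin N) :
    pdT (fun z => F z * G z) a z = pdT F a z * G z + F z * pdT G a z := by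
  simp only [pdT, fderiv_fun_mul hF hG]
  simp only [ContinuousLinearMap.add_apply, ContinuousLinearMap.smul_apply, smul_eq_mul]
  ring

lemma pdT_sub {F G : (Fin N → ℝ) × (Fin N → ℝ) → ℝ} {z : (Fin N → ℝ) × (Fin N → ℝ)}
    (hF : DifferentiableAt ℝ F z) (hG : DifferentiableAt ℝ G z) (a : Fin N ⊕ Fin N) :
    pdT (fun z => F z - G z) a z = pdT F a z - pdT G a z := by
  simp [pdT, fderiv_fun_sub hF hG]

lemma pdT_sum {ι : Type*} (t : Finset ι) {F : ι → (Fin N → ℝ) × (Fin N → ℝ) → ℝ}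
    {z : (Fin N → ℝ) × (Fin N → ℝ)}
    (hF : ∀ i ∈ t, DifferentiableAt ℝ (F i) z) (a : Fin N ⊕ Fin N) :
    pdT (fun z => ∑ i ∈ t, F i z) a z = ∑ i ∈ t, pdT (F i) a z := by
  simp [pdT, fderiv_fun_sum hF]

lemma pdT_fst {f : (Fin N → ℝ) → ℝ} {z : (Fin N → ℝ) × (Fin N → ℝ)}
    (hf : DifferentiableAt ℝ f z.1) (a : Fin N ⊕ Fin N) :
    pdT (fun z => f z.1) a z =
      Sum.elim (fun s => pd f s z.1) (fun _ => (0:ℝ)) a := by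
  have h : fderiv ℝ (fun z : (Fin N → ℝ) × (Fin N → ℝ) => f z.1) z
      = (fderiv ℝ f z.1).comp (ContinuousLinearMap.fst ℝ _ _) :=
    ((hf.hasFDerivAt.comp z hasFDerivAt_fst).fderiv)
  cases a with
  | inl s => simp [pdT, h, dir, pd]
  | inr s => simp [pdT, h, dir]

lemma pdT_snd_apply (t : Fin N) (a : Fin N ⊕ Fin N) (z : (Fin N → ℝ) × (Fin N → ℝ)) :
    pdT (fun z => z.2 t) a z = Sum.elim (fun _ => (0:ℝ)) (fun s => (Pi.single s 1 : Fin N → ℝ) t) a := by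
  have h : fderiv ℝ (fun z : (Fin N → ℝ) × (Fin N → ℝ) => z.2 t) z
      = (ContinuousLinearMap.proj t).comp (ContinuousLinearMap.snd ℝ (Fin N → ℝ) (Fin N → ℝ)) := by
    exact ((ContinuousLinearMap.proj t).comp
      (ContinuousLinearMap.snd ℝ (Fin N → ℝ) (Fin N → ℝ))).fderiv
  cases a with
  | inl s => simp [pdT, h, dir]
  | inr s => simp [pdT, h, dir]

/-- Generic: wedge of commuting smooth vector fields on `ℝ^N × ℝ^N` is Poisson. -/
lemma jacobi_wedge (u W : (Fin N → ℝ) × (Fin N → ℝ) → (Fin N ⊕ Fin N) → ℝ)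
    (hu : ∀ a, ContDiff ℝ (⊤ : ℕ∞) fun z => u z a) (hW : ∀ a, ContDiff ℝ (⊤ : ℕ∞) fun z => W z a)
    (hcomm : ∀ z b, (∑ s, u z s * pdT (fun z => W z b) s z)
      = ∑ s, W z s * pdT (fun z => u z b) s z) :
    IsPoissonT (wedge u W) := by
  refine ⟨fun a b => ((hu a).mul (hW b)).sub ((hu b).mul (hW a)),
    fun z a b => by simp only [wedge, Matrix.of_apply]; ring, ?_⟩
  intro z a b c
  have hdu : ∀ b, DifferentiableAt ℝ (fun z => u z b) z :=
    fun b => ((hu b).differentiable (by simp)).differentiableAt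
  have hdW : ∀ b, DifferentiableAt ℝ (fun z => W z b) z :=
    fun b => ((hW b).differentiable (by simp)).differentiableAt
  have expand : ∀ b c s, pdT (fun z => wedge u W z b c) s z
      = (pdT (fun z => u z b) s z * W z c + u z b * pdT (fun z => W z c) s z)
        - (pdT (fun z => u z c) s z * W z b + u z c * pdT (fun z => W z b) s z) := by
    intro b c s
    have : (fun z => wedge u W z b c) = fun z => u z b * W z c - u z c * W z b := by
      funext z; simp [wedge]
    rw [this, pdT_sub ((hdu b).fun_mul (hdW c)) ((hdu c).fun_mul (hdW b)),
      pdT_mul (hdu b) (hdW c), pdT_mul (hdu c) (hdW b)]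
  have hT : ∀ a b c, (∑ s, wedge u W z a s * pdT (fun z => wedge u W z b c) s z)
      = (u z a * W z c) * (∑ s, W z s * pdT (fun z => u z b) s z)
        + (u z a * u z b) * (∑ s, W z s * pdT (fun z => W z c) s z)
        - (u z a * W z b) * (∑ s, W z s * pdT (fun z => u z c) s z)
        - (u z a * u z c) * (∑ s, W z s * pdT (fun z => W z b) s z)
        - (W z a * W z c) * (∑ s, u z s * pdT (fun z => u z b) s z)
        - (W z a * u z b) * (∑ s, u z s * pdT (fun z => W z c) s z)
        + (W z a * W z b) * (∑ s, u z s * pdT (fun z => u z c) s z)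
        + (W z a * u z c) * (∑ s, u z s * pdT (fun z => W z b) s z) := by
    intro a b c
    have h1 : ∀ s : Fin N ⊕ Fin N, wedge u W z a s * pdT (fun z => wedge u W z b c) s z
        = (u z a * W z c) * (W z s * pdT (fun z => u z b) s z)
          + (u z a * u z b) * (W z s * pdT (fun z => W z c) s z)
          - (u z a * W z b) * (W z s * pdT (fun z => u z c) s z)
          - (u z a * u z c) * (W z s * pdT (fun z => W z b) s z)
          - (W z a * W z c) * (u z s * pdT (fun z => u z b) s z)
          - (W z a * u z b) * (u z s * pdT (fun z => W z c) s z)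
          + (W z a * W z b) * (u z s * pdT (fun z => u z c) s z)
          + (W z a * u z c) * (u z s * pdT (fun z => W z b) s z) := by
      intro s
      rw [expand b c s]
      simp only [wedge, Matrix.of_apply]
      ring
    rw [Finset.sum_congr rfl fun s _ => h1 s]
    simp only [Finset.sum_add_distrib, Finset.sum_sub_distrib, ← Finset.mul_sum]
  rw [Finset.sum_add_distrib, Finset.sum_add_distrib, hT a b c, hT b c a, hT c a b,
    hcomm z a, hcomm z b, hcomm z c]
  ring

end Helpers

/-- if `[v,w] = 0` then `v_C ∧ w_V` is a Poisson tensor. -/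
theorem wedge_liftC_liftV_commuting_is_poisson {N : ℕ}
    (v w : (Fin N → ℝ) → Fin N → ℝ)
    (hv : ∀ i, ContDiff ℝ (⊤ : ℕ∞) fun x => v x i) (hw : ∀ i, ContDiff ℝ (⊤ : ℕ∞) fun x => w x i)
    (hbr : ∀ x i, vbr v w x i = 0) :
    IsPoissonT (wedge (liftC v) (liftV w)) := by
  classical
  have hgC : ∀ i t, ContDiff ℝ (⊤ : ℕ∞) fun x => pd (fun x => v x i) t x :=
    fun i t => contDiff_pd (hv i) t
  have hu : ∀ a, ContDiff ℝ (⊤ : ℕ∞) fun z => liftC v z a := by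
    rintro (i | i)
    · exact (hv i).comp contDiff_fst
    · show ContDiff ℝ (⊤ : ℕ∞) fun z : (Fin N → ℝ) × (Fin N → ℝ) =>
        ∑ s, pd (fun x => v x i) s z.1 * z.2 s
      apply ContDiff.sum
      intro s _
      exact ((hgC i s).comp contDiff_fst).mul ((contDiff_apply ℝ ℝ s).comp contDiff_snd)
  have hW : ∀ a, ContDiff ℝ (⊤ : ℕ∞) fun z => liftV w z a := by
    rintro (i | i)
    · exact contDiff_const
    · exact (hw i).comp contDiff_fst
  refine jacobi_wedge _ _ hu hW ?_
  intro z b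
  have hdvC : ∀ i, DifferentiableAt ℝ (fun x => v x i) z.1 :=
    fun i => ((hv i).differentiable (by simp)).differentiableAt
  have hdwC : ∀ i, DifferentiableAt ℝ (fun x => w x i) z.1 :=
    fun i => ((hw i).differentiable (by simp)).differentiableAt
  cases b with
  | inl i =>
    have h2 : ∀ s, pdT (fun z => liftC v z (Sum.inl i)) (Sum.inr s) z = 0 := by
      intro s
      have he : (fun z : (Fin N → ℝ) × (Fin N → ℝ) => liftC v z (Sum.inl i))
          = fun z => v z.1 i := rfl
      rw [he, pdT_fst (hdvC i)]
      simp
    rw [Fintype.sum_sum_type, Fintype.sum_sum_type]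
    simp [liftV, pdT_const, h2]
  | inr i =>
    have hdiff1 : ∀ t : Fin N, DifferentiableAt ℝ
        (fun z : (Fin N → ℝ) × (Fin N → ℝ) => pd (fun x => v x i) t z.1) z :=
      fun t => (((hgC i t).comp contDiff_fst).differentiable (by simp)).differentiableAt
    have hdiff2 : ∀ t : Fin N, DifferentiableAt ℝ
        (fun z : (Fin N → ℝ) × (Fin N → ℝ) => z.2 t) z :=
      fun t => (((contDiff_apply ℝ ℝ t).comp contDiff_snd).differentiable (by simp : (⊤ : WithTop ℕ∞) ≠ 0)).differentiableAt
    have hgCd : ∀ t : Fin N, DifferentiableAt ℝ (fun x => pd (fun x => v x i) t x) z.1 :=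
      fun t => ((hgC i t).differentiable (by simp)).differentiableAt
    have h1 : ∀ s, pdT (fun z => liftV w z (Sum.inr i)) s z
        = Sum.elim (fun t => pd (fun x => w x i) t z.1) (fun _ => (0:ℝ)) s := by
      intro s
      have he : (fun z : (Fin N → ℝ) × (Fin N → ℝ) => liftV w z (Sum.inr i))
          = fun z => w z.1 i := rfl
      rw [he, pdT_fst (hdwC i)]
    have h2 : ∀ s, pdT (fun z => liftC v z (Sum.inr i)) (Sum.inr s) z
        = pd (fun x => v x i) s z.1 := by
      intro s
      have he : (fun z : (Fin N → ℝ) × (Fin N → ℝ) => liftC v z (Sum.inr i))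
          = fun z => ∑ t, pd (fun x => v x i) t z.1 * z.2 t := rfl
      rw [he, pdT_sum (F := fun t (z : (Fin N → ℝ) × (Fin N → ℝ)) =>
            pd (fun x => v x i) t z.1 * z.2 t)
          Finset.univ (fun t _ => (hdiff1 t).mul (hdiff2 t)) (Sum.inr s)]
      have h3 : ∀ t, pdT (fun z : (Fin N → ℝ) × (Fin N → ℝ) =>
          pd (fun x => v x i) t z.1 * z.2 t) (Sum.inr s) z
          = pd (fun x => v x i) t z.1 * (Pi.single s 1 : Fin N → ℝ) t := by
        intro t
        rw [pdT_mul (hdiff1 t) (hdiff2 t), pdT_fst (hgCd t), pdT_snd_apply]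
        simp
      rw [Finset.sum_congr rfl fun t _ => h3 t]
      rw [Finset.sum_eq_single s (fun t _ ht => by simp [Pi.single_apply, ht]) (by simp)]
      simp
    rw [Fintype.sum_sum_type, Fintype.sum_sum_type]
    have key := hbr z.1 i
    unfold vbr at key
    rw [Finset.sum_sub_distrib, sub_eq_zero] at key
    simp only [h1, h2]
    simp only [liftC, liftV, Sum.elim_inl, Sum.elim_inr, mul_zero, zero_mul,
      Finset.sum_const_zero, add_zero, zero_add]
    exact key
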